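/- Suppose X'X + Δ'Δ = d·I_p with d > 0 and the columns of X satisfy Σ_i x_{ij}² = 1 for each j. Fix λ > 0 and define the lasso OEM sequence by β^{(k+1)}_j = sign(u_j^{(k)})·((|u_j^{(k)}| − λ)₊/d), where u^{(k)} = X'Y + (d·I_p − X'X)β^{(k)}. If the initial point β^{(0)} has grouping coherence, then β^{(k)} converges as k → ∞ to a limit that has grouping coherence. -/

import Mathlib

open Filter Topology Matrix

/-- An estimator `b` has grouping coherence with respect to the regression
matrix `X`: equal columns get equal coefficients and opposite columns get
opposite coefficients. -/
def GroupingCoherence {n p : ℕ} (X : Matrix (Fin n) (Fin p) ℝ)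
    (b : Fin p → ℝ) : Prop :=
  ∀ i j : Fin p,
    ((∀ k, X k i = X k j) → b i = b j) ∧
    ((∀ k, X k i = -X k j) → b i = -b j)

/-!
The OEM map `T` is the composition of the affine map `b ↦ (X'Y + (dI - X'X) b) / d`, whose
linear part `M` satisfies `0 ⪯ M ⪯ I` (the upper bound is `X'X ⪰ 0`, the lower one is
`dI - X'X = Δ'Δ`), with coordinatewise soft-thresholding. Both maps are firmly nonexpansive, so
`T` is averaged: `‖Tx - Ty‖² + ½ ‖(Tx - Ty) - (x - y)‖² ≤ ‖x - y‖²`. A lasso minimizer, which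
exists because `λ > 0` makes the objective coercive, is a fixed point of `T` by the coordinatewise
optimality conditions; hence the iterates are Fejér monotone with respect to the fixed points and
asymptotically regular, which in finite dimension forces convergence to a fixed point.
Grouping coherence is a closed linear condition preserved by `b ↦ X'Y + (dI - X'X) b` and by
odd coordinatewise maps, so it passes from `β⁰` to every iterate and to the limit.
-/

open Function WithLp
open scoped RealInnerProductSpace

theorem exists_isFixedPt_tendsto_of_antitone_dist {α : Type*} [MetricSpace α] [ProperSpace α]
    {T : α → α} (hT : Continuous T) {x : ℕ → α} (hx : ∀ k, x (k + 1) = T (x k))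
    (hfix : ∃ z, IsFixedPt T z) (hfejer : ∀ z, IsFixedPt T z → Antitone fun k => dist (x k) z)
    (hreg : Tendsto (fun k => dist (x (k + 1)) (x k)) atTop (𝓝 0)) :
    ∃ w, IsFixedPt T w ∧ Tendsto x atTop (𝓝 w) := by
  obtain ⟨z, hz⟩ := hfix
  obtain ⟨w, -, φ, hφ, hsub⟩ := tendsto_subseq_of_bounded (x := x) Metric.isBounded_closedBall
    fun k => Metric.mem_closedBall.2 (hfejer z hz (Nat.zero_le k))
  have hw : IsFixedPt T w := by
    have hnext : Tendsto (fun k => x (φ k + 1)) atTop (𝓝 w) :=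
      hsub.congr_dist ((hreg.comp hφ.tendsto_atTop).congr fun k => dist_comm _ _)
    refine tendsto_nhds_unique ?_ hnext
    simp only [hx]
    exact (hT.tendsto w).comp hsub
  refine ⟨w, hw, Metric.tendsto_atTop.2 fun ε hε => ?_⟩
  obtain ⟨m, hm⟩ := (Metric.tendsto_atTop.1 hsub ε hε).imp fun N hN => hN N le_rfl
  exact ⟨φ m, fun k hk => (hfejer w hw hk).trans_lt hm⟩

theorem exists_isFixedPt_tendsto_of_averaged {E : Type*} [NormedAddCommGroup E] [ProperSpace E]
    {T : E → E} {c : ℝ} (hc : 0 < c)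
    (hT : ∀ x y, ‖T x - T y‖ ^ 2 + c * ‖(T x - T y) - (x - y)‖ ^ 2 ≤ ‖x - y‖ ^ 2)
    (hfix : ∃ z, IsFixedPt T z) {x : ℕ → E} (hx : ∀ k, x (k + 1) = T (x k)) :
    ∃ w, IsFixedPt T w ∧ Tendsto x atTop (𝓝 w) := by
  have hfejer : ∀ z, IsFixedPt T z → ∀ k,
      dist (x (k + 1)) z ^ 2 + c * dist (x (k + 1)) (x k) ^ 2 ≤ dist (x k) z ^ 2 := by
    intro z hz k
    simpa [dist_eq_norm, hx, hz.eq] using hT (x k) z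
  have hanti : ∀ z, IsFixedPt T z → Antitone fun k => dist (x k) z := fun z hz =>
    antitone_nat_of_succ_le fun k =>
      (pow_le_pow_iff_left₀ dist_nonneg dist_nonneg two_ne_zero).1 <| by
        nlinarith [hfejer z hz k, sq_nonneg (dist (x (k + 1)) (x k))]
  have hlip : LipschitzWith 1 T := LipschitzWith.of_dist_le_mul fun x y => by
    rw [NNReal.coe_one, one_mul, dist_eq_norm, dist_eq_norm]
    exact (pow_le_pow_iff_left₀ (norm_nonneg _) (norm_nonneg _) two_ne_zero).1 <| by
      nlinarith [hT x y, sq_nonneg ‖(T x - T y) - (x - y)‖]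
  refine exists_isFixedPt_tendsto_of_antitone_dist hlip.continuous hx hfix hanti ?_
  obtain ⟨z, hz⟩ := hfix
  set a := fun k => dist (x k) z ^ 2
  have ha : Tendsto a atTop (𝓝 (⨅ k, a k)) :=
    tendsto_atTop_ciInf (fun i j h => pow_le_pow_left₀ dist_nonneg (hanti z hz h) 2)
      ⟨0, by rintro _ ⟨k, rfl⟩; positivity⟩
  have hsq : Tendsto (fun k => dist (x (k + 1)) (x k) ^ 2) atTop (𝓝 0) := by
    have hdiff : Tendsto (fun k => (a k - a (k + 1)) / c) atTop (𝓝 0) := by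
      simpa using (ha.sub (ha.comp (tendsto_add_atTop_nat 1))).div_const c
    refine squeeze_zero (fun k => by positivity) (fun k => ?_) hdiff
    rw [le_div_iff₀ hc]
    linarith [hfejer z hz k]
  simpa [Real.sqrt_sq dist_nonneg] using hsq.sqrt

section FirmlyNonexpansive

variable {E : Type*} [NormedAddCommGroup E] [InnerProductSpace ℝ E]

def FirmlyNonexpansive (f : E → E) : Prop :=
  ∀ x y, ‖f x - f y‖ ^ 2 ≤ ⟪f x - f y, x - y⟫

theorem norm_sq_add_half_norm_sub_sq_le {t u a : E} (htu : ‖t‖ ^ 2 ≤ ⟪t, u⟫)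
    (hua : ‖u‖ ^ 2 ≤ ⟪u, a⟫) : ‖t‖ ^ 2 + 1 / 2 * ‖t - a‖ ^ 2 ≤ ‖a‖ ^ 2 := by
  -- `2‖a‖² - 2‖t‖² - ‖t - a‖² = 4 (⟪t, u⟫ - ‖t‖²) + 4 (⟪u, a⟫ - ‖u‖²) + ‖a + t - 2u‖²`
  have key : 0 ≤ ‖a + t - (2 : ℝ) • u‖ ^ 2 := by positivity
  rw [norm_sub_sq_real, norm_add_sq_real, norm_smul, inner_add_left, inner_smul_right,
    inner_smul_right] at key
  rw [real_inner_comm a u] at hua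
  rw [norm_sub_sq_real, real_inner_comm a t]
  norm_num at key
  linarith

theorem FirmlyNonexpansive.comp_averaged {f g : E → E} (hf : FirmlyNonexpansive f)
    (hg : FirmlyNonexpansive g) (x y : E) :
    ‖f (g x) - f (g y)‖ ^ 2 + 1 / 2 * ‖(f (g x) - f (g y)) - (x - y)‖ ^ 2 ≤ ‖x - y‖ ^ 2 :=
  norm_sq_add_half_norm_sub_sq_le (hf (g x) (g y)) (hg x y)

end FirmlyNonexpansive

def softThreshold (μ t : ℝ) : ℝ := t - max (-μ) (min μ t)

theorem sub_sq_le_of_monotone {f : ℝ → ℝ} (hf : Monotone f) (hf' : Monotone fun t => t - f t)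
    (x y : ℝ) : (f x - f y) ^ 2 ≤ (f x - f y) * (x - y) := by
  rcases le_total x y with h | h
  · nlinarith [hf h, hf' h]
  · nlinarith [hf h, hf' h]

theorem monotone_softThreshold (μ : ℝ) : Monotone (softThreshold μ) := by
  intro x y h
  simp only [softThreshold, min_def, max_def]
  split_ifs <;> linarith

theorem softThreshold_sub_sq_le (μ x y : ℝ) :
    (softThreshold μ x - softThreshold μ y) ^ 2 ≤
      (softThreshold μ x - softThreshold μ y) * (x - y) :=
  sub_sq_le_of_monotone (monotone_softThreshold μ)
    (by simpa [softThreshold] using monotone_const.max (monotone_const.min monotone_id)) x y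

theorem sign_mul_max_abs_sub_eq_softThreshold {μ : ℝ} (hμ : 0 ≤ μ) (t : ℝ) :
    Real.sign t * max (|t| - μ) 0 = softThreshold μ t := by
  rcases lt_trichotomy t 0 with h | rfl | h
  · rw [Real.sign_of_neg h, abs_of_neg h]
    simp only [softThreshold, min_def, max_def]
    split_ifs <;> linarith
  · simp [softThreshold, hμ]
  · rw [Real.sign_of_pos h, abs_of_pos h]
    simp only [softThreshold, min_def, max_def]
    split_ifs <;> linarith

theorem softThreshold_div {d : ℝ} (hd : 0 < d) (μ t : ℝ) :
    softThreshold μ t / d = softThreshold (μ / d) (t / d) := by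
  simp only [softThreshold, sub_div, ← neg_div, max_div_div_right hd.le, min_div_div_right hd.le]

theorem nonneg_of_forall_nonneg_mul_sq_add {a g lam z : ℝ} (hlam : 0 ≤ lam)
    (h : ∀ s, 0 ≤ a * s ^ 2 + s * g + lam * (|z + s| - |z|)) (s : ℝ) :
    0 ≤ s * g + lam * (|z + s| - |z|) := by
  -- Replacing `s` by `ε s`, convexity of `|·|` shrinks the quadratic term to `O(ε)`.
  have hscaled : ∀ ε ∈ Set.Ioo (0 : ℝ) 1,
      0 ≤ a * ε * s ^ 2 + (s * g + lam * (|z + s| - |z|)) := by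
    rintro ε ⟨hε0, hε1⟩
    have hconv : |z + ε * s| ≤ (1 - ε) * |z| + ε * |z + s| := by
      calc |z + ε * s| = |(1 - ε) * z + ε * (z + s)| := by ring_nf
        _ ≤ |(1 - ε) * z| + |ε * (z + s)| := abs_add_le _ _
        _ = (1 - ε) * |z| + ε * |z + s| := by
          rw [abs_mul, abs_mul, abs_of_pos (by linarith : (0 : ℝ) < 1 - ε), abs_of_pos hε0]
    have := h (ε * s)
    have : 0 ≤ ε * (a * ε * s ^ 2 + (s * g + lam * (|z + s| - |z|))) := by
      nlinarith [mul_le_mul_of_nonneg_left hconv hlam]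
    exact nonneg_of_mul_nonneg_right this hε0
  have hlim : Tendsto (fun ε => a * ε * s ^ 2 + (s * g + lam * (|z + s| - |z|))) (𝓝[>] 0)
      (𝓝 (s * g + lam * (|z + s| - |z|))) := by
    have : Continuous fun ε : ℝ => a * ε * s ^ 2 + (s * g + lam * (|z + s| - |z|)) := by
      fun_prop
    simpa using (this.tendsto 0).mono_left nhdsWithin_le_nhds
  exact ge_of_tendsto hlim (eventually_of_mem (Ioo_mem_nhdsGT one_pos) hscaled)

theorem softThreshold_sub_div_eq_self {d g lam z : ℝ} (hd : 0 < d)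
    (h : ∀ s, 0 ≤ s * g + lam * (|z + s| - |z|)) : softThreshold (lam / d) (z - g / d) = z := by
  rcases lt_trichotomy z 0 with hz | rfl | hz
  · have h1 := h (-z); have h2 := h z; have h3 := h (-2 * z)
    rw [add_neg_cancel, abs_zero, abs_of_neg hz] at h1
    rw [abs_of_neg (by linarith : z + z < 0), abs_of_neg hz] at h2
    rw [abs_of_pos (by linarith : 0 < z + -2 * z), abs_of_neg hz] at h3
    have hg : g = lam := by nlinarith
    have hlam : 0 ≤ lam := by nlinarith
    have : 0 ≤ lam / d := div_nonneg hlam hd.le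
    simp only [softThreshold, hg, min_def, max_def]
    split_ifs <;> linarith
  · have h1 := h 1; have h2 := h (-1)
    norm_num at h1 h2
    have e1 : g / d ≤ lam / d := div_le_div_of_nonneg_right h2 hd.le
    have e2 : -lam / d ≤ g / d := div_le_div_of_nonneg_right (by linarith) hd.le
    rw [neg_div] at e2
    simp only [softThreshold, zero_sub, min_def, max_def]
    split_ifs <;> linarith
  · have h1 := h (-z); have h2 := h z; have h3 := h (-2 * z)
    rw [add_neg_cancel, abs_zero, abs_of_pos hz] at h1
    rw [abs_of_pos (by linarith : 0 < z + z), abs_of_pos hz] at h2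
    rw [abs_of_neg (by linarith : z + -2 * z < 0), abs_of_pos hz] at h3
    have hg : g = -lam := by nlinarith
    have hlam : 0 ≤ lam := by nlinarith
    have : 0 ≤ lam / d := div_nonneg hlam hd.le
    simp only [softThreshold, hg, neg_div, min_def, max_def]
    split_ifs <;> linarith

theorem firmlyNonexpansive_euclidean_map {ι : Type*} [Fintype ι] {f : ℝ → ℝ}
    (hf : ∀ x y, (f x - f y) ^ 2 ≤ (f x - f y) * (x - y)) :
    FirmlyNonexpansive fun x : EuclideanSpace ℝ ι => toLp 2 fun i => f (x i) := by
  intro x y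
  rw [EuclideanSpace.real_norm_sq_eq, PiLp.inner_apply]
  refine Finset.sum_le_sum fun i _ => ?_
  simpa [mul_comm] using hf (x i) (y i)

theorem Matrix.PosSemidef.dotProduct_mulVec_comm {ι : Type*} [Fintype ι] {M : Matrix ι ι ℝ}
    (hM : M.PosSemidef) (u v : ι → ℝ) : u ⬝ᵥ M *ᵥ v = M *ᵥ u ⬝ᵥ v := by
  rw [dotProduct_mulVec, ← mulVec_transpose, ← conjTranspose_eq_transpose_of_trivial,
    hM.isHermitian.eq, dotProduct_comm]

theorem Matrix.PosSemidef.dotProduct_mulVec_self_nonneg {ι : Type*} [Fintype ι] {M : Matrix ι ι ℝ}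
    (hM : M.PosSemidef) (u : ι → ℝ) : 0 ≤ u ⬝ᵥ M *ᵥ u := by
  simpa using hM.dotProduct_mulVec_nonneg u

theorem mulVec_dotProduct_mulVec_self_le {ι : Type*} [Fintype ι] [DecidableEq ι]
    {M : Matrix ι ι ℝ} (hM : M.PosSemidef) (hM' : (1 - M).PosSemidef) (w : ι → ℝ) :
    M *ᵥ w ⬝ᵥ M *ᵥ w ≤ M *ᵥ w ⬝ᵥ w := by
  -- `M` and `1 - M` commute, so `⟪M w, (1 - M) w⟫` is a sum of two nonnegative quadratic forms.
  set a := M *ᵥ w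
  set b := (1 - M) *ᵥ w
  have hab : a + b = w := by simp [a, b, sub_mulVec]
  have hcomm : (1 - M) *ᵥ a = M *ᵥ b := by
    simp only [a, b, mulVec_mulVec, sub_mul, mul_sub, one_mul, mul_one]
  have hnonneg : 0 ≤ a ⬝ᵥ b := calc
    0 ≤ a ⬝ᵥ (1 - M) *ᵥ a + b ⬝ᵥ M *ᵥ b :=
      add_nonneg (hM'.dotProduct_mulVec_self_nonneg a) (hM.dotProduct_mulVec_self_nonneg b)
    _ = a ⬝ᵥ (1 - M) *ᵥ (a + b) := by
      rw [mulVec_add, dotProduct_add, hM'.dotProduct_mulVec_comm a b, hcomm, dotProduct_comm b]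
    _ = a ⬝ᵥ b := by rw [hab]
  calc a ⬝ᵥ a ≤ a ⬝ᵥ a + a ⬝ᵥ b := le_add_of_nonneg_right hnonneg
    _ = a ⬝ᵥ w := by rw [← dotProduct_add, hab]

theorem firmlyNonexpansive_euclidean_affine {ι : Type*} [Fintype ι] {M : Matrix ι ι ℝ}
    (hM : ∀ w, M *ᵥ w ⬝ᵥ M *ᵥ w ≤ M *ᵥ w ⬝ᵥ w) (c : ι → ℝ) :
    FirmlyNonexpansive fun x : EuclideanSpace ℝ ι => toLp 2 (c + M *ᵥ ofLp x) := by
  intro x y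
  rw [← real_inner_self_eq_norm_sq, ← toLp_sub, add_sub_add_left_eq_sub, ← mulVec_sub,
    ← toLp_ofLp 2 (x - y), EuclideanSpace.inner_toLp_toLp, EuclideanSpace.inner_toLp_toLp,
    ofLp_sub]
  simpa [dotProduct_comm] using hM (ofLp x - ofLp y)

section Lasso

variable {κ ι : Type*} [Fintype κ] [Fintype ι]

noncomputable def lassoObjective (X : Matrix κ ι ℝ) (Y : κ → ℝ) (lam : ℝ) (b : ι → ℝ) : ℝ :=
  (X *ᵥ b - Y) ⬝ᵥ (X *ᵥ b - Y) / 2 + lam * ∑ i, |b i|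

theorem exists_forall_lassoObjective_le (X : Matrix κ ι ℝ) (Y : κ → ℝ) {lam : ℝ}
    (hlam : 0 < lam) : ∃ z, ∀ b, lassoObjective X Y lam z ≤ lassoObjective X Y lam b := by
  refine Continuous.exists_forall_le (by unfold lassoObjective; fun_prop) ?_
  refine tendsto_atTop_mono (fun b => ?_) (tendsto_norm_cocompact_atTop.const_mul_atTop hlam)
  have hnorm : ‖b‖ ≤ ∑ i, |b i| :=
    (pi_norm_le_iff_of_nonneg (by positivity)).2 fun j =>
      Finset.single_le_sum (f := fun i => |b i|) (fun i _ => abs_nonneg _) (Finset.mem_univ j)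
  have hsq : 0 ≤ (X *ᵥ b - Y) ⬝ᵥ (X *ᵥ b - Y) := Finset.sum_nonneg fun i _ => mul_self_nonneg _
  unfold lassoObjective
  nlinarith

variable [DecidableEq ι]

theorem lassoObjective_add_smul_single (X : Matrix κ ι ℝ) (Y : κ → ℝ) (lam : ℝ) (b : ι → ℝ)
    (j : ι) (s : ℝ) :
    lassoObjective X Y lam (b + s • Pi.single j 1) = lassoObjective X Y lam b +
      (s ^ 2 * (X.col j ⬝ᵥ X.col j) / 2 + s * (Xᵀ *ᵥ (X *ᵥ b - Y)) j
        + lam * (|b j + s| - |b j|)) := by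
  have hl1 : ∑ i, |(b + s • Pi.single j (1 : ℝ) : ι → ℝ) i| =
      ∑ i, |b i| + (|b j + s| - |b j|) := by
    rw [← sub_eq_iff_eq_add', ← Finset.sum_sub_distrib,
      Finset.sum_eq_single j (fun i _ hi => by simp [hi]) (by simp)]
    simp
  have hcol : (Xᵀ *ᵥ (X *ᵥ b - Y)) j = X.col j ⬝ᵥ (X *ᵥ b - Y) := rfl
  simp only [lassoObjective, hl1, hcol, mulVec_add, mulVec_smul, mulVec_single_one,
    add_sub_right_comm, add_dotProduct, dotProduct_add, smul_dotProduct, dotProduct_smul,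
    dotProduct_comm (X *ᵥ b - Y), smul_eq_mul]
  ring

/-- One lasso OEM iteration, on Euclidean space so that the contraction estimates are in `ℓ²`. -/
noncomputable def lassoOEMStep (X : Matrix κ ι ℝ) (Y : κ → ℝ) (d lam : ℝ)
    (b : EuclideanSpace ℝ ι) : EuclideanSpace ℝ ι :=
  toLp 2 fun j =>
    softThreshold (lam / d) ((Xᵀ *ᵥ Y + (d • (1 : Matrix ι ι ℝ) - Xᵀ * X) *ᵥ ofLp b) j / d)

theorem lassoOEMStep_averaged (X : Matrix κ ι ℝ) (Y : κ → ℝ) {d : ℝ} (lam : ℝ) (hd : 0 < d)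
    (hX : (d • 1 - Xᵀ * X).PosSemidef) (x y : EuclideanSpace ℝ ι) :
    ‖lassoOEMStep X Y d lam x - lassoOEMStep X Y d lam y‖ ^ 2 +
        1 / 2 * ‖(lassoOEMStep X Y d lam x - lassoOEMStep X Y d lam y) - (x - y)‖ ^ 2 ≤
      ‖x - y‖ ^ 2 := by
  set M := d⁻¹ • (d • 1 - Xᵀ * X)
  have hM : M.PosSemidef := hX.smul (inv_nonneg.2 hd.le)
  have hM' : (1 - M).PosSemidef := by
    have : 1 - M = d⁻¹ • (Xᵀ * X) := by simp [M, smul_sub, smul_smul, inv_mul_cancel₀ hd.ne']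
    rw [this, ← conjTranspose_eq_transpose_of_trivial]
    exact (posSemidef_conjTranspose_mul_self X).smul (inv_nonneg.2 hd.le)
  have hT : lassoOEMStep X Y d lam =
      (fun x : EuclideanSpace ℝ ι => toLp 2 fun i => softThreshold (lam / d) (x i)) ∘
        fun x : EuclideanSpace ℝ ι => toLp 2 (d⁻¹ • (Xᵀ *ᵥ Y) + M *ᵥ ofLp x) := by
    funext b
    simp [lassoOEMStep, M, smul_mulVec, div_eq_inv_mul, mul_add]
  rw [hT]
  exact (firmlyNonexpansive_euclidean_map (softThreshold_sub_sq_le _)).comp_averaged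
    (firmlyNonexpansive_euclidean_affine (mulVec_dotProduct_mulVec_self_le hM hM') _) x y

theorem isFixedPt_lassoOEMStep (X : Matrix κ ι ℝ) (Y : κ → ℝ) {d lam : ℝ} (hd : 0 < d)
    (hlam : 0 ≤ lam) {z : ι → ℝ}
    (hz : ∀ b, lassoObjective X Y lam z ≤ lassoObjective X Y lam b) :
    IsFixedPt (lassoOEMStep X Y d lam) (toLp 2 z) := by
  refine congrArg (toLp 2) (funext fun j => ?_)
  have hu : (Xᵀ *ᵥ Y + (d • (1 : Matrix ι ι ℝ) - Xᵀ * X) *ᵥ z) j / d =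
      z j - (Xᵀ *ᵥ (X *ᵥ z - Y)) j / d := by
    simp only [sub_mulVec, smul_mulVec, one_mulVec, ← mulVec_mulVec, mulVec_sub, Pi.add_apply,
      Pi.sub_apply, Pi.smul_apply, smul_eq_mul]
    field_simp
    ring
  rw [ofLp_toLp, hu]
  refine softThreshold_sub_div_eq_self hd
    (nonneg_of_forall_nonneg_mul_sq_add (a := X.col j ⬝ᵥ X.col j / 2) hlam fun s => ?_)
  have := hz (z + s • Pi.single j 1)
  rw [lassoObjective_add_smul_single] at this
  linarith

end Lasso

section GroupingCoherence

variable {n p : ℕ} {X : Matrix (Fin n) (Fin p) ℝ}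

theorem GroupingCoherence.add {b c : Fin p → ℝ} (hb : GroupingCoherence X b)
    (hc : GroupingCoherence X c) : GroupingCoherence X (b + c) := fun i j =>
  ⟨fun h => by simp [(hb i j).1 h, (hc i j).1 h],
    fun h => by simp [(hb i j).2 h, (hc i j).2 h, add_comm]⟩

theorem GroupingCoherence.sub {b c : Fin p → ℝ} (hb : GroupingCoherence X b)
    (hc : GroupingCoherence X c) : GroupingCoherence X (b - c) := fun i j =>
  ⟨fun h => by simp [(hb i j).1 h, (hc i j).1 h],
    fun h => by simp [(hb i j).2 h, (hc i j).2 h, neg_add_eq_sub]⟩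

theorem GroupingCoherence.const_smul {b : Fin p → ℝ} (hb : GroupingCoherence X b) (a : ℝ) :
    GroupingCoherence X (a • b) := fun i j =>
  ⟨fun h => by simp [(hb i j).1 h], fun h => by simp [(hb i j).2 h]⟩

theorem GroupingCoherence.comp_odd {b : Fin p → ℝ} (hb : GroupingCoherence X b) {f : ℝ → ℝ}
    (hf : ∀ t, f (-t) = -f t) : GroupingCoherence X fun j => f (b j) := fun i j =>
  ⟨fun h => by dsimp only; rw [(hb i j).1 h], fun h => by dsimp only; rw [(hb i j).2 h, hf]⟩

theorem groupingCoherence_transpose_mulVec (X : Matrix (Fin n) (Fin p) ℝ) (v : Fin n → ℝ) :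
    GroupingCoherence X (Xᵀ *ᵥ v) := fun i j =>
  ⟨fun h => by simp [mulVec, dotProduct, h], fun h => by simp [mulVec, dotProduct, h]⟩

theorem GroupingCoherence.oemUpdate {b : Fin p → ℝ} (hb : GroupingCoherence X b)
    (Y : Fin n → ℝ) (d : ℝ) :
    GroupingCoherence X (Xᵀ *ᵥ Y + (d • (1 : Matrix (Fin p) (Fin p) ℝ) - Xᵀ * X) *ᵥ b) := by
  rw [sub_mulVec, smul_mulVec, one_mulVec, ← mulVec_mulVec]
  exact (groupingCoherence_transpose_mulVec X Y).add
    ((hb.const_smul d).sub (groupingCoherence_transpose_mulVec X _))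

theorem isClosed_setOf_groupingCoherence (X : Matrix (Fin n) (Fin p) ℝ) :
    IsClosed {b | GroupingCoherence X b} := by
  simp only [GroupingCoherence, Set.ofPred_forall, Set.ofPred_and]
  refine isClosed_iInter fun i => isClosed_iInter fun j => IsClosed.inter ?_ ?_
  · by_cases h : ∀ k, X k i = X k j
    · simpa [h] using isClosed_eq (continuous_apply i) (continuous_apply j)
    · simp [h]
  · by_cases h : ∀ k, X k i = -X k j
    · simpa [h] using isClosed_eq (continuous_apply i) (continuous_apply j).neg
    · simp [h]

end GroupingCoherence

theorem stmt10_general {n m p : ℕ} (X : Matrix (Fin n) (Fin p) ℝ) (Y : Fin n → ℝ)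
    (Δ : Matrix (Fin m) (Fin p) ℝ) (d lam : ℝ) (hd : 0 < d) (hlam : 0 < lam)
    (hXΔ : Xᵀ * X + Δᵀ * Δ = d • (1 : Matrix (Fin p) (Fin p) ℝ))
    (βs : ℕ → Fin p → ℝ)
    (hrec : ∀ k j, βs (k + 1) j =
      Real.sign ((Xᵀ.mulVec Y
          + (d • (1 : Matrix (Fin p) (Fin p) ℝ) - Xᵀ * X).mulVec (βs k)) j) *
        (max (|(Xᵀ.mulVec Y
          + (d • (1 : Matrix (Fin p) (Fin p) ℝ) - Xᵀ * X).mulVec (βs k)) j| - lam) 0 / d))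
    (h0 : GroupingCoherence X (βs 0)) :
    ∃ bstar : Fin p → ℝ, Tendsto βs atTop (𝓝 bstar) ∧ GroupingCoherence X bstar := by
  have hX : (d • 1 - Xᵀ * X).PosSemidef := by
    rw [← hXΔ, add_sub_cancel_left, ← conjTranspose_eq_transpose_of_trivial]
    exact posSemidef_conjTranspose_mul_self Δ
  have hstep : ∀ k, toLp 2 (βs (k + 1)) = lassoOEMStep X Y d lam (toLp 2 (βs k)) := fun k =>
    congrArg (toLp 2) <| funext fun j => by
      rw [hrec, ← mul_div_assoc, sign_mul_max_abs_sub_eq_softThreshold hlam.le,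
        softThreshold_div hd, ofLp_toLp]
  obtain ⟨z, hz⟩ := exists_forall_lassoObjective_le X Y hlam
  obtain ⟨w, -, hw⟩ := exists_isFixedPt_tendsto_of_averaged (x := fun k => toLp 2 (βs k))
    one_half_pos (lassoOEMStep_averaged X Y lam hd hX)
    ⟨_, isFixedPt_lassoOEMStep X Y hd hlam.le hz⟩ hstep
  have hlim : Tendsto βs atTop (𝓝 (ofLp w)) := ((PiLp.continuous_ofLp 2 _).tendsto w).comp hw
  have hcoh : ∀ k, GroupingCoherence X (βs k) := fun k => by
    induction k with
    | zero => exact h0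
    | succ k ih =>
      rw [funext (hrec k)]
      exact (ih.oemUpdate Y d).comp_odd (f := fun t => Real.sign t * (max (|t| - lam) 0 / d))
        fun t => by simp [Real.sign_neg]
  exact ⟨ofLp w, hlim, (isClosed_setOf_groupingCoherence X).mem_of_tendsto hlim
    (Eventually.of_forall hcoh)⟩

/-- Theorem 7, grouping coherence of the lasso OEM limit.
Suppose `XᵀX + ΔᵀΔ = d·I_p` with `d > 0` and the columns of `X` are
standardized (`∑ᵢ x_{ij}² = 1`).  If the initial value of the lasso OEM
sequence has grouping coherence, then the sequence converges to a limit that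
has grouping coherence. -/
theorem stmt10 {n m p : ℕ} (X : Matrix (Fin n) (Fin p) ℝ) (Y : Fin n → ℝ)
    (Δ : Matrix (Fin m) (Fin p) ℝ) (d lam : ℝ) (hd : 0 < d) (hlam : 0 < lam)
    (hXΔ : Xᵀ * X + Δᵀ * Δ = d • (1 : Matrix (Fin p) (Fin p) ℝ))
    (hstand : ∀ j, ∑ i, (X i j) ^ 2 = 1)
    (βs : ℕ → Fin p → ℝ)
    (hrec : ∀ k j, βs (k + 1) j =
      Real.sign ((Xᵀ.mulVec Y
          + (d • (1 : Matrix (Fin p) (Fin p) ℝ) - Xᵀ * X).mulVec (βs k)) j) *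
        (max (|(Xᵀ.mulVec Y
          + (d • (1 : Matrix (Fin p) (Fin p) ℝ) - Xᵀ * X).mulVec (βs k)) j| - lam) 0 / d))
    (h0 : GroupingCoherence X (βs 0)) :
    ∃ bstar : Fin p → ℝ, Tendsto βs atTop (𝓝 bstar) ∧ GroupingCoherence X bstar :=
  stmt10_general X Y Δ d lam hd hlam hXΔ βs hrec h0
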